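/- Let 𝔾 be a normalized distance graph. Let ↑𝔾 be obtained from 𝔾 by: for every history clock x ∈ X_H, replacing 𝔾_{0x} by (<,+∞) if 𝔾_{0x} ≠ (≤,+∞); for every future clock x ∈ X_F, replacing 𝔾_{0x} by (≤,0) if 𝔾_{0x} ≠ (≤,-∞); and leaving all other edge weights unchanged. Then ⟦↑𝔾⟧ = ↑⟦𝔾⟧, where ↑W := {v+δ : v ∈ W, δ ≥ 0 real, (v+δ)(x) ≤ 0 for all x ∈ X_F}. -/

import Mathlib

noncomputable section

open Classical

attribute [local instance] Classical.propDecidable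

namespace GTA

/-- A comparison operator: strict `<` or non-strict `≤`. -/
inductive Cmp where
  | lt : Cmp
  | le : Cmp
deriving DecidableEq

/-- `Cmp.holds ◁ a b` means `a ◁ b` in `ℝ̄ = EReal`. -/
def Cmp.holds : Cmp → EReal → EReal → Prop
  | .lt, a, b => a < b
  | .le, a, b => a ≤ b

/-- Extended addition on `ℝ̄`: `(+∞) + α = α + (+∞) = +∞` for all `α`,
and `(-∞) + β = β + (-∞) = -∞` for `β ≠ +∞`. -/
def eadd (a b : EReal) : EReal := if a = ⊤ ∨ b = ⊤ then ⊤ else a + b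

/-- Extended subtraction `β - α := β + (-α)`. -/
def esub (a b : EReal) : EReal := eadd a (-b)

/-- Constants of atomic constraints: elements of `ℤ ∪ {-∞, +∞}`. -/
inductive EConst where
  | ninf : EConst
  | int : ℤ → EConst
  | pinf : EConst
deriving DecidableEq

def EConst.toEReal : EConst → EReal
  | .ninf => ⊥
  | .int k => ((k : ℝ) : EReal)
  | .pinf => ⊤

variable {C : Type*}

/-- A valuation over the clock set `C` (vertices `Option C`, where `none` is the
special clock `0`), with future clocks `XF` and history clocks the complement of `XF`:
`v 0 = 0`, history clocks take values in `[0, +∞]`, future clocks in `[-∞, 0]`. -/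
structure Val (C : Type*) (XF : Set C) where
  toFun : Option C → EReal
  zero' : toFun none = 0
  hist' : ∀ x : C, x ∉ XF → 0 ≤ toFun (some x)
  fut' : ∀ x : C, x ∈ XF → toFun (some x) ≤ 0

/-- Shift of a clock map by a real delay `δ`: every clock in `X` increases by `δ`,
the special clock `0` keeps value `0`. -/
def shift (u : Option C → EReal) (δ : ℝ) : Option C → EReal
  | none => 0
  | some x => eadd (u (some x)) ((δ : ℝ) : EReal)

/-- An atomic constraint `y - x ◁ c` with `x, y ∈ X ∪ {0}` and `c ∈ ℤ ∪ {-∞,+∞}`. -/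
structure Atom (C : Type*) where
  y : Option C
  x : Option C
  cmp : Cmp
  c : EConst

/-- Satisfaction `u ⊨ y - x ◁ c`, i.e. `u(y) - u(x) ◁ c` with extended subtraction. -/
def asat (u : Option C → EReal) (φ : Atom C) : Prop :=
  φ.cmp.holds (esub (u φ.y) (u φ.x)) φ.c.toEReal

/-- The simulation preorder `≼_G` on clock maps: for every `φ ∈ G` and every real
`δ ≥ 0`, `u + δ ⊨ φ` implies `u' + δ ⊨ φ`. -/
def simLeFun (G : Set (Atom C)) (u u' : Option C → EReal) : Prop :=
  ∀ φ ∈ G, ∀ δ : ℝ, 0 ≤ δ → asat (shift u δ) φ → asat (shift u' δ) φ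

/-- `v ≼_G v'` on valuations. -/
def simLe (XF : Set C) (G : Set (Atom C)) (v v' : Val C XF) : Prop :=
  simLeFun G v.toFun v'.toFun

/-- `v' ∈ [R]v`: history clocks in `R` are reset to `0`, future clocks in `R` are
released (any value in `[-∞,0]`, automatic for valuations), other clocks unchanged. -/
def releaseRel (XF : Set C) (R : Set C) (v v' : Val C XF) : Prop :=
  (∀ x ∈ R, x ∉ XF → v'.toFun (some x) = 0) ∧
  ∀ x : C, x ∉ R → v'.toFun (some x) = v.toFun (some x)

/-- `[R]Z`. -/
def changeSet (XF : Set C) (R : Set C) (Z : Set (Val C XF)) : Set (Val C XF) :=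
  { v' | ∃ v ∈ Z, releaseRel XF R v v' }

/-- Time elapse `↑Z = {v + δ : v ∈ Z, δ ≥ 0, (v+δ)(x) ≤ 0 for all future x}`
(the latter condition is automatic since elements are valuations). -/
def elapseSet (XF : Set C) (Z : Set (Val C XF)) : Set (Val C XF) :=
  { w | ∃ v ∈ Z, ∃ δ : ℝ, 0 ≤ δ ∧ w.toFun = shift v.toFun δ }

/-- Membership of a vertex in a set of clocks (the clock `0` is in no such set). -/
def inR (R : Set C) : Option C → Prop
  | none => False
  | some x => x ∈ R

/-- `pre([R])(G)`. -/
def preChange (R : Set C) (G : Set (Atom C)) : Set (Atom C) :=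
  { ψ | ∃ φ ∈ G,
      (¬ inR R φ.x ∧ ¬ inR R φ.y ∧ ψ = φ) ∨
      (inR R φ.x ∧ ¬ inR R φ.y ∧ ψ = { φ with x := none }) ∨
      (¬ inR R φ.x ∧ inR R φ.y ∧ ψ = { φ with y := none }) }

/-- Instantaneous timed programs: guards (finite conjunctions of atomic constraints),
changes `[R]`, and sequential composition. -/
inductive Prog (C : Type*) where
  | guard : List (Atom C) → Prog C
  | change : Set C → Prog C
  | seq : Prog C → Prog C → Prog C

/-- Semantics `v →prog v'` of programs. -/
def Prog.steps (XF : Set C) : Prog C → Val C XF → Val C XF → Prop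
  | .guard g, v, v' => (∀ φ ∈ g, asat v.toFun φ) ∧ v' = v
  | .change R, v, v' => releaseRel XF R v v'
  | .seq p q, v, v' => ∃ u, Prog.steps XF p v u ∧ Prog.steps XF q u v'

/-- `pre(prog)(G)`. -/
def Prog.pre : Prog C → Set (Atom C) → Set (Atom C)
  | .guard g, G => { φ | φ ∈ g } ∪ G
  | .change R, G => preChange R G
  | .seq p q, G => Prog.pre p (Prog.pre q G)

/-- A weight `(◁, c)` with `c ∈ ℝ̄`. -/
structure Weight where
  cmp : Cmp
  c : EReal

/-- Strict order on weights. -/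
def Weight.lt (w w' : Weight) : Prop :=
  w.c < w'.c ∨ (w.c = w'.c ∧ w.cmp = Cmp.lt ∧ w'.cmp = Cmp.le)

/-- Non-strict order on weights. -/
def Weight.le (w w' : Weight) : Prop := Weight.lt w w' ∨ w = w'

/-- Sum of weights. -/
def Weight.add (w w' : Weight) : Weight :=
  if w = ⟨Cmp.lt, ⊥⟩ ∨ w' = ⟨Cmp.lt, ⊥⟩ then ⟨Cmp.lt, ⊥⟩
  else if w = ⟨Cmp.le, ⊤⟩ ∨ w' = ⟨Cmp.le, ⊤⟩ then ⟨Cmp.le, ⊤⟩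
  else if w = ⟨Cmp.le, ⊥⟩ ∨ w' = ⟨Cmp.le, ⊥⟩ then ⟨Cmp.le, ⊥⟩
  else if w = ⟨Cmp.lt, ⊤⟩ ∨ w' = ⟨Cmp.lt, ⊤⟩ then ⟨Cmp.lt, ⊤⟩
  else ⟨if w.cmp = Cmp.le ∧ w'.cmp = Cmp.le then Cmp.le else Cmp.lt, w.c + w'.c⟩

/-- Minimum of two weights. -/
def Weight.min (w w' : Weight) : Weight := if Weight.le w w' then w else w'

/-- A weight `(◁, c)` is finite if `c ∈ ℝ`. -/
def Weight.Finite (w : Weight) : Prop := w.c ≠ ⊥ ∧ w.c ≠ ⊤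

/-- A distance graph: a weight on each ordered pair of distinct vertices of
`X ∪ {0}`; self-loops carry the trivial weight `(≤, +∞)`. -/
structure DGraph (C : Type*) where
  w : Option C → Option C → Weight
  refl' : ∀ a : Option C, w a a = ⟨Cmp.le, ⊤⟩

namespace DGraph

/-- A well-formed distance graph has no edge of weight `(<, -∞)`. -/
def WF (G : DGraph C) : Prop := ∀ a b, G.w a b ≠ ⟨Cmp.lt, ⊥⟩

/-- The semantics `⟦𝔾⟧` of a distance graph. -/
def sem (G : DGraph C) (XF : Set C) : Set (Val C XF) :=
  { v | ∀ a b : Option C, (G.w a b).cmp.holds (esub (v.toFun b) (v.toFun a)) (G.w a b).c }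

/-- Weight of the path `a₀ → a₁ → ⋯ → aₙ` given as the list `[a₀, …, aₙ]`. -/
def chainWeight (G : DGraph C) : List (Option C) → Weight
  | a :: b :: l => Weight.add (G.w a b) (G.chainWeight (b :: l))
  | _ => ⟨Cmp.le, 0⟩

end DGraph

/-- `l` is a path from `a` to `b`: at least one edge, consecutive vertices distinct. -/
def IsPath (l : List (Option C)) (a b : Option C) : Prop :=
  2 ≤ l.length ∧ l.head? = some a ∧ l.getLast? = some b ∧ l.Chain' (· ≠ ·)

namespace DGraph

/-- `𝔾` has a negative cycle: a cycle of weight strictly less than `(≤, 0)`. -/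
def HasNegCycle (G : DGraph C) : Prop :=
  ∃ (a : Option C) (l : List (Option C)),
    IsPath l a a ∧ Weight.lt (G.chainWeight l) ⟨Cmp.le, 0⟩

/-- `𝔾` is in standard form. -/
def Standard (G : DGraph C) (XF : Set C) : Prop :=
  (∀ x ∈ XF, Weight.le (G.w none (some x)) ⟨Cmp.le, 0⟩) ∧
  (∀ x : C, x ∉ XF → Weight.le (G.w (some x) none) ⟨Cmp.le, 0⟩) ∧
  (∀ x y : C, G.w (some x) (some y) ≠ ⟨Cmp.le, ⊤⟩ →
    G.w (some x) none ≠ ⟨Cmp.le, ⊤⟩ ∧ G.w none (some y) ≠ ⟨Cmp.le, ⊤⟩)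

/-- `𝔾` is normalized: standard form, no negative cycle, and every edge weight is
minimal among the weights of paths between its endpoints. -/
def Normalized (G : DGraph C) (XF : Set C) : Prop :=
  G.Standard XF ∧ ¬ G.HasNegCycle ∧
  ∀ (a b : Option C) (l : List (Option C)), a ≠ b → IsPath l a b →
    Weight.le (G.w a b) (G.chainWeight l)

/-- Weight function of the standardization of `𝔾`. -/
def stdW (G : DGraph C) (XF : Set C) : Option C → Option C → Weight
  | none, some y =>
      if y ∈ XF then Weight.min (G.w none (some y)) ⟨Cmp.le, 0⟩
      else if ∃ a : Option C, a ≠ some y ∧ G.w a (some y) ≠ ⟨Cmp.le, ⊤⟩ then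
        Weight.min (G.w none (some y)) ⟨Cmp.lt, ⊤⟩
      else G.w none (some y)
  | some x, none =>
      if x ∈ XF then
        (if ∃ b : Option C, b ≠ some x ∧ G.w (some x) b ≠ ⟨Cmp.le, ⊤⟩ then
          Weight.min (G.w (some x) none) ⟨Cmp.lt, ⊤⟩
        else G.w (some x) none)
      else Weight.min (G.w (some x) none) ⟨Cmp.le, 0⟩
  | a, b => G.w a b

/-- The standardization of a distance graph. -/
def standardize (G : DGraph C) (XF : Set C) : DGraph C where
  w := G.stdW XF
  refl' := fun a => by
    cases a with
    | none => exact G.refl' none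
    | some x => exact G.refl' (some x)

/-- Intersecting a distance graph with a single atomic constraint `y - x ◁ c`:
the weight of the edge `x → y` is replaced by `min(𝔾_{xy}, (◁, c))`. -/
def addAtom (G : DGraph C) (φ : Atom C) : DGraph C where
  w := fun a b =>
    if a = φ.x ∧ b = φ.y ∧ φ.x ≠ φ.y then
      Weight.min (G.w a b) ⟨φ.cmp, φ.c.toEReal⟩
    else G.w a b
  refl' := fun a => by
    have h : ¬ (a = φ.x ∧ a = φ.y ∧ φ.x ≠ φ.y) := by
      rintro ⟨h1, h2, h3⟩
      exact h3 (h1 ▸ h2 ▸ rfl)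
    show (if a = φ.x ∧ a = φ.y ∧ φ.x ≠ φ.y then
      Weight.min (G.w a a) ⟨φ.cmp, φ.c.toEReal⟩ else G.w a a) = ⟨Cmp.le, ⊤⟩
    rw [if_neg h]
    exact G.refl' a

/-- Intersecting a distance graph with a guard (list of atomic constraints). -/
def guardGraph (G : DGraph C) : List (Atom C) → DGraph C
  | [] => G
  | φ :: g => (G.guardGraph g).addAtom φ

/-- Edgewise minimum of two distance graphs. -/
def minG (G H : DGraph C) : DGraph C where
  w := fun a b => Weight.min (G.w a b) (H.w a b)
  refl' := fun a => by
    show Weight.min (G.w a a) (H.w a a) = _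
    rw [G.refl', H.refl']
    exact ite_self _

end DGraph

/-- The distance graph `𝔾_v^G`. -/
def upGraph (XF : Set C) (G : Set (Atom C)) (v : Val C XF) : DGraph C where
  w := fun a b =>
    match a, b with
    | some x, none =>
        if x ∈ XF then ⟨Cmp.le, -(v.toFun (some x))⟩
        else if ∃ φ ∈ G, φ.y = none ∧ φ.x = some x ∧ φ.c ≠ EConst.ninf ∧ ¬ asat v.toFun φ
          then ⟨Cmp.le, -(v.toFun (some x))⟩
        else ⟨Cmp.le, ⊤⟩
    | none, some y =>
        if y ∈ XF then ⟨Cmp.le, v.toFun (some y)⟩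
        else if ∃ φ ∈ G, φ.y = some y ∧ φ.x = none ∧ φ.c ≠ EConst.pinf ∧ asat v.toFun φ
          then ⟨Cmp.le, v.toFun (some y)⟩
        else ⟨Cmp.le, ⊤⟩
    | _, _ => ⟨Cmp.le, ⊤⟩
  refl' := fun a => by cases a <;> rfl

/-- The guard `g_v^G`: all constraints of `G` satisfied by `v`. -/
def upGuard (G : Set (Atom C)) (u : Option C → EReal) : Set (Atom C) :=
  { φ ∈ G | asat u φ }

/-- An atomic constraint is `M`-bounded. -/
def MBounded (M : ℕ) (φ : Atom C) : Prop :=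
  (∃ k : ℤ, φ.c = EConst.int k ∧ -(M : ℤ) ≤ k ∧ k ≤ (M : ℤ)) ∨
  (φ.cmp = Cmp.le ∧ φ.c = EConst.ninf) ∨ φ.c = EConst.pinf

/-- An atomic constraint is `M`-bounded integral (constant in `{-∞,+∞} ∪ [-M, M] ∩ ℤ`). -/
def MBoundedIntegral (M : ℕ) (φ : Atom C) : Prop :=
  (∃ k : ℤ, φ.c = EConst.int k ∧ -(M : ℤ) ≤ k ∧ k ≤ (M : ℤ)) ∨
  φ.c = EConst.ninf ∨ φ.c = EConst.pinf

/-- An atomic constraint is `X_D`-safe: if both endpoints are future clocks,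
they are in `X_D`. -/
def XDSafe (XF XD : Set C) (φ : Atom C) : Prop :=
  ∀ x y : C, φ.x = some x → φ.y = some y → x ∈ XF → y ∈ XF → x ∈ XD ∧ y ∈ XD

/-- Vertices in `X_F ∪ {0}`. -/
def futV (XF : Set C) : Option C → Prop
  | none => True
  | some x => x ∈ XF

/-- Vertices in `X_H ∪ {0}`. -/
def histV (XF : Set C) : Option C → Prop
  | none => True
  | some x => x ∉ XF

/-- The equivalence `v₁ ≃ v₂`: agreement on history clocks and on all
`(X_D, M)`-safe constraints over `X_F ∪ {0}`. -/
def simeqV (XF XD : Set C) (M : ℕ) (v₁ v₂ : Val C XF) : Prop :=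
  (∀ x : C, x ∉ XF → v₁.toFun (some x) = v₂.toFun (some x)) ∧
  ∀ φ : Atom C, XDSafe XF XD φ → MBounded M φ → futV XF φ.x → futV XF φ.y →
    (asat v₁.toFun φ ↔ asat v₂.toFun φ)

/-- `(X_D, M)`-safely reachable zones: obtained from the initial zone
`↑(𝕍 ∧ g₀)` (`g₀` fixing each history clock to `0` or `+∞`) by the
`(X_D, M)`-safe zone operations. -/
inductive SafeReach (XF XD : Set C) (M : ℕ) : Set (Val C XF) → Prop where
  | init (f : C → EReal) (hf : ∀ x : C, x ∉ XF → f x = 0 ∨ f x = ⊤) :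
      SafeReach XF XD M (elapseSet XF { v | ∀ x : C, x ∉ XF → v.toFun (some x) = f x })
  | guard {Z : Set (Val C XF)} (g : Set (Atom C))
      (hg : ∀ φ ∈ g, XDSafe XF XD φ ∧ MBounded M φ)
      (h : SafeReach XF XD M Z) :
      SafeReach XF XD M { v ∈ Z | ∀ φ ∈ g, asat v.toFun φ }
  | changeSimple {Z : Set (Val C XF)} (x : C) (hx : x ∉ XD) (h : SafeReach XF XD M Z) :
      SafeReach XF XD M (changeSet XF {x} Z)
  | changeD {Z : Set (Val C XF)} (x : C) (hx : x ∈ XD) (c : EReal) (hc : c = 0 ∨ c = ⊥)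
      (h : SafeReach XF XD M Z) :
      SafeReach XF XD M (changeSet XF {x} { v ∈ Z | v.toFun (some x) = c })
  | elapse {Z : Set (Val C XF)} (h : SafeReach XF XD M Z) :
      SafeReach XF XD M (elapseSet XF Z)

/-- `α ∼_K β` on `ℝ̄`. -/
def eqvK (K : ℕ) (α β : EReal) : Prop :=
  ∀ (cmp : Cmp) (c : EReal),
    (c = ⊥ ∨ c = ⊤ ∨ ∃ k : ℤ, c = ((k : ℝ) : EReal) ∧ |k| ≤ (K : ℤ)) →
    (cmp.holds α c ↔ cmp.holds β c)

/-- The equivalence `v ∼ⁿ_M v'` on valuations. -/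
def simVn (XF : Set C) (M n : ℕ) (v v' : Val C XF) : Prop :=
  (∀ x : C, eqvK (n * M) (v.toFun (some x)) (v'.toFun (some x))) ∧
  ∀ x y : C, eqvK ((n + 1) * M)
    (esub (v.toFun (some x)) (v.toFun (some y)))
    (esub (v'.toFun (some x)) (v'.toFun (some y)))

/-- The `(†)` conditions for a distance graph with bound `B` (usually `B = nM`). -/
def Dagger (XF : Set C) (B : ℕ) (G : DGraph C) : Prop :=
  (∀ x ∈ XF, (∃ b : Option C, histV XF b ∧ (G.w (some x) b).Finite) →
     Weight.le ⟨Cmp.le, 0⟩ (G.w (some x) none) ∧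
     Weight.le (G.w (some x) none) ⟨Cmp.le, ((B : ℝ) : EReal)⟩) ∧
  (∀ x ∈ XF, (G.w none (some x)).Finite →
     Weight.le ⟨Cmp.lt, ((-(B : ℝ) : ℝ) : EReal)⟩ (G.w none (some x)) ∧
     Weight.le (G.w none (some x)) ⟨Cmp.le, 0⟩) ∧
  (∀ x : C, x ∉ XF → ∀ y ∈ XF, (G.w none (some y)).Finite →
     Weight.le (Weight.add (G.w (some x) none) ⟨Cmp.lt, ((-(B : ℝ) : ℝ) : EReal)⟩)
       (G.w (some x) (some y))) ∧
  (∀ x ∈ XF, ∀ y ∈ XF, (G.w (some x) (some y)).Finite →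
     Weight.le ⟨Cmp.lt, ((-(B : ℝ) : ℝ) : EReal)⟩ (G.w (some x) (some y)) ∧
     Weight.le (G.w (some x) (some y)) ⟨Cmp.le, ((B : ℝ) : EReal)⟩)

end GTA

namespace GTA

/-!
For `w ∈ ⟦↑𝔾⟧` we look for a delay `δ ≥ 0` with `w - δ ∈ ⟦𝔾⟧`. Edges between clocks do not see
the shift, each edge `0 → y` bounds `δ` from below and each edge `x → 0` from above, and the
standard form makes `w - δ` a valuation. By a one-dimensional Helly argument it suffices to meet
each lower bound together with each upper bound. For real values this amounts to
`w(y) - w(x) ◁ 𝔾_{x0} + 𝔾_{0y}`, which holds since `w ⊨ 𝔾_{xy}` and `𝔾_{xy}` is at most the weight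
of the path `x → 0 → y` (for `x = y`: since `x → 0 → x` is not a negative cycle). The infinite
cases are settled by the modified edges `0 → y` of `↑𝔾` and by the absence of negative cycles
through `0`. The converse inclusion is checked edge by edge.
-/

section

variable {C : Type*}

lemma eadd_coe (a : EReal) (d : ℝ) : eadd a d = a + d := by
  induction a using EReal.rec <;> simp [eadd]

lemma esub_coe (a : EReal) (d : ℝ) : esub a d = a - d := by
  rw [esub, ← EReal.coe_neg, eadd_coe, EReal.coe_neg, sub_eq_add_neg]

lemma esub_coe_coe (a d : ℝ) : esub a d = ((a - d : ℝ) : EReal) := by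
  rw [esub_coe, EReal.coe_sub]

lemma esub_zero (a : EReal) : esub a 0 = a := by
  simpa using esub_coe a 0

lemma esub_top_right {a : EReal} (h : a ≠ ⊤) : esub a ⊤ = ⊥ := by
  simp [esub, eadd, h]

lemma esub_bot_right (a : EReal) : esub a ⊥ = ⊤ := by
  simp [esub, eadd]

lemma esub_add_coe_add_coe (a b : EReal) (d : ℝ) : esub (a + d) (b + d) = esub a b := by
  induction a using EReal.rec <;> induction b using EReal.rec <;>
    simp [esub, eadd, ← EReal.coe_add, ← EReal.coe_neg]

lemma esub_sub_coe_sub_coe (a b : EReal) (d : ℝ) : esub (a - d) (b - d) = esub a b := by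
  induction a using EReal.rec <;> induction b using EReal.rec <;>
    simp [esub, eadd, ← EReal.coe_add, ← EReal.coe_neg, sub_eq_add_neg]

lemma esub_zero_sub_coe (a : EReal) (d : ℝ) : esub 0 (a - d) = esub d a := by
  induction a using EReal.rec <;>
    simp [esub, eadd, ← EReal.coe_add, ← EReal.coe_neg, sub_eq_add_neg]

lemma esub_zero_add_coe_le (a : EReal) {d : ℝ} (hd : 0 ≤ d) : esub 0 (a + d) ≤ esub 0 a := by
  induction a using EReal.rec <;> simp [esub, eadd, ← EReal.coe_add, ← EReal.coe_neg, hd]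

lemma esub_coe_anti (a : EReal) {d d' : ℝ} (h : d ≤ d') : esub a d' ≤ esub a d := by
  rw [esub_coe, esub_coe]
  exact EReal.sub_le_sub le_rfl (EReal.coe_le_coe_iff.2 h)

lemma esub_coe_mono {d d' : ℝ} (h : d ≤ d') (b : EReal) : esub d b ≤ esub d' b := by
  induction b using EReal.rec <;> simp [esub, eadd, ← EReal.coe_add, ← EReal.coe_neg, h]

lemma esub_zero_nonpos_iff (r : EReal) : esub 0 r ≤ 0 ↔ 0 ≤ r := by
  induction r using EReal.rec <;> simp [esub, eadd, ← EReal.coe_neg]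

namespace Weight

def Holds (W : Weight) (r : EReal) : Prop := W.cmp.holds r W.c

theorem Holds.of_le {W : Weight} {r r' : EReal} (h : W.Holds r) (hr : r' ≤ r) : W.Holds r' := by
  obtain ⟨_ | _, c⟩ := W
  exacts [hr.trans_lt h, hr.trans h]

theorem Holds.le_c {W : Weight} {r : EReal} (h : W.Holds r) : r ≤ W.c := by
  obtain ⟨_ | _, c⟩ := W
  exacts [le_of_lt h, h]

theorem holds_of_lt_c {W : Weight} {r : EReal} (h : r < W.c) : W.Holds r := by
  obtain ⟨_ | _, c⟩ := W
  exacts [h, h.le]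

theorem Holds.mono {W W' : Weight} (hW : W.le W') {r : EReal} (h : W.Holds r) : W'.Holds r := by
  rcases hW with (hc | ⟨hc, hlt, hle⟩) | rfl
  · exact holds_of_lt_c (h.le_c.trans_lt hc)
  · obtain ⟨cmp, c⟩ := W
    obtain ⟨cmp', c'⟩ := W'
    simp only at hc hlt hle
    subst hc hlt hle
    exact le_of_lt h
  · exact h

theorem holds_le_top (r : EReal) : (⟨Cmp.le, ⊤⟩ : Weight).Holds r := le_top

theorem holds_bot {W : Weight} (hW : W ≠ ⟨Cmp.lt, ⊥⟩) : W.Holds ⊥ := by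
  obtain ⟨_ | _, c⟩ := W
  · exact bot_lt_iff_ne_bot.2 fun hc : c = ⊥ => hW (hc ▸ rfl)
  · exact bot_le

theorem eq_le_bot {W : Weight} (hW : W ≠ ⟨Cmp.lt, ⊥⟩) (hc : W.c = ⊥) : W = ⟨Cmp.le, ⊥⟩ := by
  obtain ⟨_ | _, c⟩ := W <;> simp_all

theorem lt_top_of_holds {W : Weight} (hW : W ≠ ⟨Cmp.le, ⊤⟩) {r : EReal} (h : W.Holds r) :
    r < ⊤ := by
  obtain ⟨_ | _, c⟩ := W
  · exact h.trans_le le_top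
  · exact h.trans_lt (lt_top_iff_ne_top.2 fun hc : c = ⊤ => hW (hc ▸ rfl))

theorem holds_zero_of_not_lt {W : Weight} (h : ¬ W.lt ⟨Cmp.le, 0⟩) : W.Holds 0 := by
  obtain ⟨_ | _, c⟩ := W <;> simp only [Weight.lt, not_or, not_and] at h
  · exact lt_of_le_of_ne (not_lt.1 h.1) fun hc => by simp_all
  · exact not_lt.1 h.1

theorem ne_le_top_of_le_zero {W : Weight} (h : W.le ⟨Cmp.le, 0⟩) : W ≠ ⟨Cmp.le, ⊤⟩ := by
  rintro rfl
  exact absurd ((holds_le_top ⊤).mono h) (by simp [Holds, Cmp.holds])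

theorem add_le_zero {W : Weight} (hW : W ≠ ⟨Cmp.lt, ⊥⟩) : W.add ⟨Cmp.le, 0⟩ = W := by
  obtain ⟨_ | _, c⟩ := W <;> induction c using EReal.rec <;> simp_all [Weight.add]

theorem add_coe_coe (c₁ c₂ : Cmp) (g₁ g₂ : ℝ) :
    Weight.add ⟨c₁, g₁⟩ ⟨c₂, g₂⟩ =
      ⟨if c₁ = Cmp.le ∧ c₂ = Cmp.le then Cmp.le else Cmp.lt, ((g₁ + g₂ : ℝ) : EReal)⟩ := by
  simp [Weight.add, EReal.coe_add]

theorem le_bot_add {W : Weight} (h₁ : W ≠ ⟨Cmp.lt, ⊥⟩) (h₂ : W ≠ ⟨Cmp.le, ⊤⟩) :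
    Weight.add ⟨Cmp.le, ⊥⟩ W = ⟨Cmp.le, ⊥⟩ := by
  simp [Weight.add, h₁, h₂]

theorem exists_coe_of_not_holds {W : Weight} (hW : W ≠ ⟨Cmp.lt, ⊥⟩) {u : EReal} (hu : u ≠ ⊤)
    (hc : W.c ≠ ⊥) (h : ¬ W.Holds u) : ∃ α g : ℝ, u = α ∧ W.c = g := by
  induction u using EReal.rec with
  | bot => exact absurd (holds_bot hW) h
  | top => exact absurd rfl hu
  | coe α =>
    induction hWc : W.c using EReal.rec with
    | bot => exact absurd hWc hc
    | top => exact absurd (holds_of_lt_c (hWc ▸ EReal.coe_lt_top α)) h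
    | coe g => exact ⟨α, g, rfl, rfl⟩

theorem exists_coe_of_not_forall_holds {W : Weight} (hW : W ≠ ⟨Cmp.lt, ⊥⟩) {u : EReal}
    (h₀ : W.Holds (esub (0 : ℝ) u)) (h : ∃ t : ℝ, ¬ W.Holds (esub t u)) :
    ∃ β g : ℝ, u = β ∧ W.c = g := by
  obtain ⟨t, ht⟩ := h
  induction u using EReal.rec with
  | bot =>
    rw [esub_bot_right] at h₀ ht
    exact absurd h₀ ht
  | top => exact absurd (holds_bot hW) (esub_top_right (EReal.coe_ne_top t) ▸ ht)
  | coe β =>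
    rw [esub_coe_coe] at h₀ ht
    induction hWc : W.c using EReal.rec with
    | bot => exact absurd (hWc ▸ h₀.le_c) (EReal.coe_ne_bot _ ∘ le_bot_iff.1)
    | top => exact absurd (holds_of_lt_c (hWc ▸ EReal.coe_lt_top _)) ht
    | coe g => exact ⟨β, g, rfl, rfl⟩

theorem exists_delay {W₁ W₂ : Weight} {α β g₁ g₂ : ℝ} (h₁ : W₁.c = g₁) (h₂ : W₂.c = g₂)
    (h₀ : W₂.Holds ((0 - β : ℝ))) (hsum : (W₂.add W₁).Holds ((α - β : ℝ))) :
    ∃ t : ℝ, 0 ≤ t ∧ W₁.Holds ((α - t : ℝ)) ∧ W₂.Holds ((t - β : ℝ)) := by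
  obtain ⟨c₁, _⟩ := W₁
  obtain ⟨c₂, _⟩ := W₂
  subst h₁ h₂
  rw [add_coe_coe] at hsum
  have hmax := le_max_left 0 (α - g₁)
  have hmax' := le_max_right 0 (α - g₁)
  cases c₁ <;> cases c₂ <;>
    simp only [Holds, Cmp.holds, EReal.coe_le_coe_iff, EReal.coe_lt_coe_iff, reduceCtorEq,
      and_self, and_false, false_and, ↓reduceIte] at h₀ hsum ⊢
  · have : max 0 (α - g₁) < β + g₂ := max_lt (by linarith) (by linarith)
    exact ⟨(max 0 (α - g₁) + (β + g₂)) / 2, by linarith, by linarith, by linarith⟩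
  · exact ⟨β + g₂, by linarith, by linarith, by linarith⟩
  · have : max 0 (α - g₁) < β + g₂ := max_lt (by linarith) (by linarith)
    exact ⟨max 0 (α - g₁), hmax, by linarith, by linarith⟩
  · have : max 0 (α - g₁) ≤ β + g₂ := max_le (by linarith) (by linarith)
    exact ⟨max 0 (α - g₁), hmax, by linarith, by linarith⟩

end Weight

theorem exists_forall_mem_of_isUpperSet_of_isLowerSet {ι α : Type*} [Finite ι] [Nonempty ι]
    [LinearOrder α] {L U : ι → Set α} (hL : ∀ i, IsUpperSet (L i)) (hU : ∀ i, IsLowerSet (U i))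
    (h : ∀ i j, (L i ∩ U j).Nonempty) : ∃ x, ∀ i, x ∈ L i ∧ x ∈ U i := by
  choose f hf using h
  choose m hm using fun i => Finite.exists_min (f i)
  obtain ⟨a, ha⟩ := Finite.exists_max fun i => f i (m i)
  exact ⟨f a (m a), fun i => ⟨hL i (ha i) (hf i (m i)).1, hU i (hm a i) (hf a i).2⟩⟩

namespace DGraph

variable {XF : Set C} {G : DGraph C}

theorem holds_w_self (G : DGraph C) (a : Option C) (r : EReal) : (G.w a a).Holds r :=
  G.refl' a ▸ Weight.holds_le_top r

theorem isPath_triple {a b c : Option C} (hac : a ≠ c) (hcb : c ≠ b) : IsPath [a, c, b] a b :=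
  ⟨by simp, rfl, rfl,
    List.IsChain.cons_cons hac (List.IsChain.cons_cons hcb (List.IsChain.singleton _))⟩

theorem chainWeight_triple (hWF : G.WF) (a b c : Option C) :
    G.chainWeight [a, c, b] = (G.w a c).add (G.w c b) := by
  change (G.w a c).add ((G.w c b).add ⟨Cmp.le, 0⟩) = _
  rw [Weight.add_le_zero (hWF c b)]

theorem Normalized.le_add (hG : G.Normalized XF) (hWF : G.WF) {a b c : Option C} (hab : a ≠ b)
    (hac : a ≠ c) (hcb : c ≠ b) : (G.w a b).le ((G.w a c).add (G.w c b)) :=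
  chainWeight_triple hWF a b c ▸ hG.2.2 a b _ hab (isPath_triple hac hcb)

theorem Normalized.not_add_lt_zero (hG : G.Normalized XF) (hWF : G.WF) {a b : Option C}
    (hab : a ≠ b) : ¬ ((G.w a b).add (G.w b a)).lt ⟨Cmp.le, 0⟩ := fun h =>
  hG.2.1 ⟨a, [a, b, a], isPath_triple hab hab.symm, chainWeight_triple hWF a a b ▸ h⟩

theorem Normalized.w_zero_ne_le_bot (hG : G.Normalized XF) (hWF : G.WF) {y : C} (hy : y ∉ XF) :
    G.w none (some y) ≠ ⟨Cmp.le, ⊥⟩ := by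
  intro h
  apply hG.not_add_lt_zero hWF (Option.some_ne_none y).symm
  rw [h, Weight.le_bot_add (hWF _ _) (Weight.ne_le_top_of_le_zero (hG.1.2.1 y hy))]
  exact Or.inl EReal.bot_lt_zero

theorem Normalized.holds_add_of_eq_coe (hG : G.Normalized XF) (hWF : G.WF)
    {u : Option C → EReal}
    (hu : ∀ x y : C, (G.w (some x) (some y)).Holds (esub (u (some y)) (u (some x))))
    {x y : C} {β : ℝ} (hx : u (some x) = β) :
    ((G.w (some x) none).add (G.w none (some y))).Holds (esub (u (some y)) β) := by
  by_cases hxy : x = y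
  · subst hxy
    rw [hx, esub_coe_coe, sub_self, EReal.coe_zero]
    exact Weight.holds_zero_of_not_lt (hG.not_add_lt_zero hWF (Option.some_ne_none x))
  · exact hx ▸ (hu x y).mono (hG.le_add hWF (by simpa using hxy) (Option.some_ne_none x)
      (Option.some_ne_none y).symm)

/-- The delays `δ ≥ 0` for which `u - δ` satisfies the edge `0 → a`. -/
def lowerDelays (G : DGraph C) (u : Option C → EReal) (a : Option C) : Set ℝ :=
  {t | 0 ≤ t ∧ (G.w none a).Holds (esub (u a) t)}

/-- The delays `δ` for which `u - δ` satisfies the edge `b → 0`. -/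
def upperDelays (G : DGraph C) (u : Option C → EReal) (b : Option C) : Set ℝ :=
  {t | (G.w b none).Holds (esub t (u b))}

theorem isUpperSet_lowerDelays (u : Option C → EReal) (a : Option C) :
    IsUpperSet (G.lowerDelays u a) :=
  fun _ _ hst ht => ⟨ht.1.trans hst, ht.2.of_le (esub_coe_anti _ hst)⟩

theorem isLowerSet_upperDelays (u : Option C → EReal) (b : Option C) :
    IsLowerSet (G.upperDelays u b) :=
  fun _ _ hst ht => ht.of_le (esub_coe_mono hst _)

theorem exists_mem_sem_shift_eq (hstd : G.Standard XF) {w : Val C XF}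
    (hw : ∀ x y : C, (G.w (some x) (some y)).Holds (esub (w.toFun (some y)) (w.toFun (some x))))
    {δ : ℝ} (hδ : ∀ a, δ ∈ G.lowerDelays w.toFun a ∧ δ ∈ G.upperDelays w.toFun a) :
    ∃ v ∈ G.sem XF, w.toFun = shift v.toFun δ := by
  have hδ₀ : 0 ≤ δ := (hδ none).1.1
  let v : Val C XF :=
    { toFun := fun a => a.elim 0 fun x => w.toFun (some x) - δ
      zero' := rfl
      hist' := fun x hx => by
        have h := ((hδ (some x)).2.mono (hstd.2.1 x hx)).le_c
        rwa [← esub_zero_sub_coe, esub_zero_nonpos_iff] at h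
      fut' := fun x hx => by
        have h := EReal.sub_le_sub (le_refl (w.toFun (some x))) (EReal.coe_nonneg.2 hδ₀)
        exact (sub_zero (w.toFun (some x)) ▸ h).trans (w.fut' x hx) }
  refine ⟨v, ?_, ?_⟩
  · rintro (_ | x) (_ | y)
    · exact G.holds_w_self none _
    · show (G.w none (some y)).Holds (esub (w.toFun (some y) - δ) 0)
      rw [esub_zero, ← esub_coe]
      exact (hδ _).1.2
    · show (G.w (some x) none).Holds (esub 0 (w.toFun (some x) - δ))
      rw [esub_zero_sub_coe]
      exact (hδ _).2
    · show (G.w (some x) (some y)).Holds (esub (w.toFun (some y) - δ) (w.toFun (some x) - δ))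
      rw [esub_sub_coe_sub_coe]
      exact hw x y
  · funext a
    cases a with
    | none => exact w.zero'
    | some x => exact (eadd_coe _ _ ▸ EReal.sub_add_cancel).symm

end DGraph

/-- `Gup` is the graph `↑𝔾` obtained from `G` by letting time elapse. -/
structure IsElapseGraph (XF : Set C) (G Gup : DGraph C) : Prop where
  hist : ∀ x : C, x ∉ XF → Gup.w none (some x) =
    if G.w none (some x) = ⟨Cmp.le, ⊤⟩ then G.w none (some x) else ⟨Cmp.lt, ⊤⟩
  fut : ∀ x ∈ XF, Gup.w none (some x) =
    if G.w none (some x) = ⟨Cmp.le, ⊥⟩ then G.w none (some x) else ⟨Cmp.le, 0⟩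
  rest : ∀ a b : Option C, a ≠ none → Gup.w a b = G.w a b

namespace IsElapseGraph

open DGraph

variable {XF : Set C} {G Gup : DGraph C} {w : Val C XF}

theorem holds_of_mem_sem (hup : IsElapseGraph XF G Gup) (hw : w ∈ Gup.sem XF) (x : C)
    (b : Option C) : (G.w (some x) b).Holds (esub (w.toFun b) (w.toFun (some x))) :=
  hup.rest _ b (Option.some_ne_none x) ▸ hw (some x) b

theorem zero_mem_upperDelays (hup : IsElapseGraph XF G Gup) (hw : w ∈ Gup.sem XF)
    (b : Option C) : 0 ∈ G.upperDelays w.toFun b := by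
  cases b with
  | none => exact G.holds_w_self none _
  | some x =>
    rw [upperDelays, Set.mem_ofPred_eq, EReal.coe_zero, ← w.zero']
    exact hup.holds_of_mem_sem hw x none

theorem exists_coe_of_zero_not_mem_lowerDelays (hup : IsElapseGraph XF G Gup) (hWF : G.WF)
    (hG : G.Normalized XF) (hw : w ∈ Gup.sem XF) {y : C}
    (h : 0 ∉ G.lowerDelays w.toFun (some y)) :
    ∃ α g : ℝ, w.toFun (some y) = α ∧ (G.w none (some y)).c = g := by
  have hy : ¬ (G.w none (some y)).Holds (w.toFun (some y)) := by
    simpa [lowerDelays, esub_zero] using h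
  have hwy : (Gup.w none (some y)).Holds (esub (w.toFun (some y)) (w.toFun none)) :=
    hw none (some y)
  rw [w.zero', esub_zero] at hwy
  have hne_top : G.w none (some y) ≠ ⟨Cmp.le, ⊤⟩ := fun h' => hy (h' ▸ Weight.holds_le_top _)
  refine Weight.exists_coe_of_not_holds (hWF _ _) ?_ ?_ hy
  · by_cases hyF : y ∈ XF
    · exact ((w.fut' y hyF).trans_lt EReal.zero_lt_top).ne
    · rw [hup.hist y hyF, if_neg hne_top] at hwy
      exact hwy.ne
  · intro hc
    have hbot := Weight.eq_le_bot (hWF _ _) hc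
    by_cases hyF : y ∈ XF
    · rw [hup.fut y hyF, if_pos hbot] at hwy
      exact hy hwy
    · exact hG.w_zero_ne_le_bot hWF hyF hbot

theorem lowerDelays_inter_upperDelays_nonempty (hup : IsElapseGraph XF G Gup) (hWF : G.WF)
    (hG : G.Normalized XF) (hw : w ∈ Gup.sem XF) (a b : Option C) :
    (G.lowerDelays w.toFun a ∩ G.upperDelays w.toFun b).Nonempty := by
  by_cases h₀ : 0 ∈ G.lowerDelays w.toFun a
  · exact ⟨0, h₀, hup.zero_mem_upperDelays hw b⟩
  obtain _ | y := a
  · exact absurd ⟨le_rfl, G.holds_w_self none _⟩ h₀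
  obtain ⟨α, g, hα, hg⟩ := hup.exists_coe_of_zero_not_mem_lowerDelays hWF hG hw h₀
  by_cases hU : ∀ t, t ∈ G.upperDelays w.toFun b
  · refine ⟨max 0 (α - g + 1), ⟨le_max_left _ _, Weight.holds_of_lt_c ?_⟩, hU _⟩
    rw [hα, esub_coe_coe, hg, EReal.coe_lt_coe_iff]
    linarith [le_max_right 0 (α - g + 1)]
  obtain ⟨t, ht⟩ := not_forall.1 hU
  obtain _ | x := b
  · exact absurd (G.holds_w_self none _) ht
  have h0 := hup.zero_mem_upperDelays hw (some x)
  obtain ⟨β, g', hβ, hg'⟩ := Weight.exists_coe_of_not_forall_holds (hWF _ _) h0 ⟨t, ht⟩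
  have hsum := hG.holds_add_of_eq_coe hWF (y := y)
    (fun x y => hup.holds_of_mem_sem hw x (some y)) hβ
  rw [hα, esub_coe_coe] at hsum
  rw [upperDelays, Set.mem_ofPred_eq, hβ, esub_coe_coe] at h0
  obtain ⟨δ, hδ₀, hδ₁, hδ₂⟩ := Weight.exists_delay hg hg' h0 hsum
  refine ⟨δ, ⟨hδ₀, ?_⟩, ?_⟩
  · rwa [hα, esub_coe_coe]
  · rwa [upperDelays, Set.mem_ofPred_eq, hβ, esub_coe_coe]

theorem sem_subset_elapseSet [Finite C] (hup : IsElapseGraph XF G Gup) (hWF : G.WF)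
    (hG : G.Normalized XF) : Gup.sem XF ⊆ elapseSet XF (G.sem XF) := by
  intro w hw
  obtain ⟨δ, hδ⟩ := exists_forall_mem_of_isUpperSet_of_isLowerSet
    (G.isUpperSet_lowerDelays w.toFun) (G.isLowerSet_upperDelays w.toFun)
    (hup.lowerDelays_inter_upperDelays_nonempty hWF hG hw)
  obtain ⟨v, hv, hwv⟩ :=
    G.exists_mem_sem_shift_eq hG.1 (fun x y => hup.holds_of_mem_sem hw x (some y)) hδ
  exact ⟨v, hv, δ, (hδ none).1.1, hwv⟩

theorem elapseSet_sem_subset (hup : IsElapseGraph XF G Gup) :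
    elapseSet XF (G.sem XF) ⊆ Gup.sem XF := by
  rintro w ⟨v, hv, δ, hδ, hwv⟩
  have hw : ∀ x, w.toFun (some x) = v.toFun (some x) + δ := fun x => by
    rw [hwv]; exact eadd_coe _ _
  rintro (_ | x) (_ | y)
  · exact Gup.holds_w_self none _
  · have hvy := hv none (some y)
    rw [v.zero', esub_zero] at hvy
    show (Gup.w none (some y)).Holds (esub (w.toFun (some y)) (w.toFun none))
    rw [w.zero', esub_zero]
    by_cases hyF : y ∈ XF
    · rw [hup.fut y hyF]
      split_ifs with hbot
      · rw [hbot] at hvy ⊢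
        rw [hw, le_bot_iff.1 hvy, EReal.bot_add]
        exact le_rfl
      · exact w.fut' y hyF
    · rw [hup.hist y hyF]
      split_ifs with htop
      · rw [htop]; exact Weight.holds_le_top _
      · rw [hw]
        exact EReal.add_lt_top (Weight.lt_top_of_holds htop hvy).ne (EReal.coe_ne_top δ)
  · show (Gup.w (some x) none).Holds (esub (w.toFun none) (w.toFun (some x)))
    rw [hup.rest _ _ (Option.some_ne_none x), w.zero', hw]
    exact (v.zero' ▸ hv (some x) none : (G.w (some x) none).Holds _).of_le
      (esub_zero_add_coe_le _ hδ)
  · show (Gup.w (some x) (some y)).Holds (esub (w.toFun (some y)) (w.toFun (some x)))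
    rw [hup.rest _ _ (Option.some_ne_none x), hw, hw, esub_add_coe_add_coe]
    exact hv (some x) (some y)

end IsElapseGraph

end

/-- time elapse on distance graphs: `⟦↑𝔾⟧ = ↑⟦𝔾⟧`. -/
theorem time_elapse {C : Type*} [Finite C] (XF : Set C)
    (G Gup : DGraph C) (hWF : G.WF) (hnorm : G.Normalized XF)
    (hH : ∀ x : C, x ∉ XF →
      Gup.w none (some x) =
        if G.w none (some x) = ⟨Cmp.le, ⊤⟩ then G.w none (some x) else ⟨Cmp.lt, ⊤⟩)
    (hF : ∀ x ∈ XF,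
      Gup.w none (some x) =
        if G.w none (some x) = ⟨Cmp.le, ⊥⟩ then G.w none (some x) else ⟨Cmp.le, 0⟩)
    (hrest : ∀ a b : Option C, a ≠ none → Gup.w a b = G.w a b) :
    Gup.sem XF = elapseSet XF (G.sem XF) := by
  have hup : IsElapseGraph XF G Gup := ⟨hH, hF, hrest⟩
  exact (hup.sem_subset_elapseSet hWF hnorm).antisymm hup.elapseSet_sem_subset

end GTA
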